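/- arXiv:0811.0835 — 8 statements merged into one kernel-verified Lean document; each statement's English description precedes it below -/
import Mathlib

section
/- Let f : gl(n,ℂ) → ℂ be a polynomial invariant under conjugation by GL(n,ℂ). For any x ∈ gl(n,ℂ), the gradient ∇f(x) of f with respect to the trace form (defined by trace(∇f(x)·z) = d/dt|_{t=0} f(x+tz) for all z) commutes with x, i.e., [∇f(x), x] = 0. -/
/-!
Conjugating `x` by `1 + t y`, a unit for small `t`, leaves `f` unchanged; since a polynomial is
Fréchet differentiable, the chain rule along this curve gives `df_x [x, y] = 0` for every `y`.
By cyclicity of the trace, `trace ([∇f(x), x] y) = df_x [x, y]`, and the trace form is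
nondegenerate.
-/

open Matrix Filter Topology

section ConjInvariant

variable {𝕜 A : Type*} [NontriviallyNormedField 𝕜] [NormedRing A] [HasSummableGeomSeries A]
  [NormedAlgebra 𝕜 A]

theorem hasDerivAt_conj_one_add_smul (x y : A) :
    HasDerivAt (fun t : 𝕜 => Ring.inverse (1 + t • y) * x * (1 + t • y)) (x * y - y * x) 0 := by
  have hu : HasDerivAt (fun t : 𝕜 => 1 + t • y) y 0 := by
    simpa using ((hasDerivAt_id (0 : 𝕜)).smul_const y).const_add 1
  have hv : HasDerivAt (fun t : 𝕜 => Ring.inverse (1 + t • y)) (-y) 0 := by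
    have := (hasFDerivAt_ringInverse (𝕜 := 𝕜) (1 : Aˣ)).comp_hasDerivAt_of_eq 0 hu (by simp)
    simpa [Function.comp_def] using this
  simpa [Pi.mul_def, ← sub_eq_neg_add] using (hv.mul_const x).mul hu

theorem eventually_isUnit_one_add_smul (y : A) : ∀ᶠ t : 𝕜 in 𝓝 0, IsUnit (1 + t • y) := by
  have hcont : Tendsto (fun t : 𝕜 => 1 + t • y) (𝓝 0) (𝓝 ((1 : Aˣ) : A)) := by
    simpa using ((continuous_id.smul continuous_const).const_add (1 : A)).tendsto (0 : 𝕜)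
  exact hcont (Units.nhds 1)

theorem fderiv_apply_commutator_eq_zero_of_conj_invariant {F : Type*} [NormedAddCommGroup F]
    [NormedSpace 𝕜 F] {f : A → F} (hf : ∀ (g : Aˣ) (x : A), f (g * x * ↑g⁻¹) = f x) {x : A}
    (hfx : DifferentiableAt 𝕜 f x) (y : A) : fderiv 𝕜 f x (x * y - y * x) = 0 := by
  have hconst : (fun t : 𝕜 => f (Ring.inverse (1 + t • y) * x * (1 + t • y))) =ᶠ[𝓝 0]
      fun _ => f x := by
    filter_upwards [eventually_isUnit_one_add_smul y] with t ⟨u, hu⟩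
    rw [← hu, Ring.inverse_unit]
    simpa only [inv_inv] using hf u⁻¹ x
  exact (hfx.hasFDerivAt.comp_hasDerivAt_of_eq 0 (hasDerivAt_conj_one_add_smul x y)
    (by simp)).unique ((hasDerivAt_const 0 (f x)).congr_of_eventuallyEq hconst)

end ConjInvariant

attribute [local instance] Matrix.linftyOpNormedRing Matrix.linftyOpNormedAlgebra

section Matrix

variable {n R : Type*} [Fintype n]

theorem Matrix.trace_mul_commutator [CommRing R] (g x y : Matrix n n R) :
    (g * (x * y - y * x)).trace = ((g * x - x * g) * y).trace := by
  rw [mul_sub, sub_mul, trace_sub, trace_sub, ← mul_assoc, ← mul_assoc, trace_mul_cycle g y x]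

theorem Matrix.differentiable_eval_mvPolynomial_entries {𝕜 : Type*} [NontriviallyNormedField 𝕜]
    [CompleteSpace 𝕜] [DecidableEq n] (P : MvPolynomial (n × n) 𝕜) :
    Differentiable 𝕜 fun x : Matrix n n 𝕜 => MvPolynomial.eval (fun p => x p.1 p.2) P :=
  fun x => ((AnalyticOnNhd.eval_linearMap
    (LinearEquiv.curry 𝕜 𝕜 n n).symm.toLinearMap P) x trivial).differentiableAt

end Matrix

/-- If `f : gl(n,ℂ) → ℂ` is a polynomial function invariant under conjugation by
`GL(n,ℂ)`, and `gradf x` is its gradient with respect to the trace form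
(`trace (gradf x * z) = d/dt|₀ f (x + t z)` for all `z`), then `[∇f(x), x] = 0`. -/
theorem grad_invariant_commutes (n : ℕ)
    (f : Matrix (Fin n) (Fin n) ℂ → ℂ)
    (hpoly : ∃ P : MvPolynomial (Fin n × Fin n) ℂ,
      ∀ x, f x = MvPolynomial.eval (fun p => x p.1 p.2) P)
    (hinv : ∀ g : GL (Fin n) ℂ, ∀ x : Matrix (Fin n) (Fin n) ℂ,
      f ((g : Matrix (Fin n) (Fin n) ℂ) * x * ((g⁻¹ : GL (Fin n) ℂ) : Matrix (Fin n) (Fin n) ℂ)) = f x)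
    (gradf : Matrix (Fin n) (Fin n) ℂ → Matrix (Fin n) (Fin n) ℂ)
    (hgrad : ∀ x z : Matrix (Fin n) (Fin n) ℂ,
      (gradf x * z).trace = deriv (fun t : ℂ => f (x + t • z)) 0)
    (x : Matrix (Fin n) (Fin n) ℂ) :
    gradf x * x - x * gradf x = 0 := by
  obtain ⟨P, hP⟩ := hpoly
  have hf : Differentiable ℂ f :=
    funext hP ▸ Matrix.differentiable_eval_mvPolynomial_entries P
  refine Matrix.ext_iff_trace_mul_right.mpr fun y => ?_
  rw [zero_mul, trace_zero, ← trace_mul_commutator, hgrad]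
  exact (hf x).lineDeriv_eq_fderiv.trans
    (fderiv_apply_commutator_eq_zero_of_conj_invariant hinv (hf x) y)
end

section
/- Let x ∈ gl(n,ℂ) and let f_{i,j}(x) = trace((x_i)^j), where x_i denotes the top-left i×i submatrix of x. For fixed i < n, the curve t ↦ Ad(exp(-t·j·(x_i)^{j-1}))·x (where (x_i)^{j-1} is regarded as an n×n matrix with zeros outside the top-left i×i block) leaves the i×i cutoff unchanged: for all t, the top-left i×i submatrix of Ad(exp(-t·j·(x_i)^{j-1}))·x equals x_i. -/
/-!
Write `E` for the diagonal projection onto the first `i` coordinates, so that the cutoff of `y`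
is `E * y * E`, and put `C = E * x * E`. The generator `(x_i)^{j-1}` of the flow is
`E * C ^ (j - 1) * E`, which commutes with both `E` and `C`; hence so do the exponentials `g⁻¹`
and `g` of the flow, and `E * (g⁻¹ * x * g) * E = g⁻¹ * C * g = C`.
-/

open Matrix

/-- The top-left `i×i` cutoff of `x`, viewed as an `n×n` matrix
(zero outside the top-left `i×i` block). -/
def cutoff (n : ℕ) (x : Matrix (Fin n) (Fin n) ℂ) (i : ℕ) : Matrix (Fin n) (Fin n) ℂ :=
  Matrix.of fun a b => if (a : ℕ) < i ∧ (b : ℕ) < i then x a b else 0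

/-- The `k`-th power of the cutoff `x_i`, computed in `gl(i)` and embedded back
into `gl(n)` as a top-left block (in particular `(x_i)^0` is the embedded
identity of `gl(i)`). -/
def blkpow (n : ℕ) (x : Matrix (Fin n) (Fin n) ℂ) (i k : ℕ) : Matrix (Fin n) (Fin n) ℂ :=
  cutoff n ((cutoff n x i) ^ k) i

section Monoid

variable {R : Type*} [Monoid R]

theorem IsIdempotentElem.mul_mul_mul_self {e : R} (he : IsIdempotentElem e) (y : R) :
    e * (e * y * e) = e * y * e := by
  rw [← mul_assoc, ← mul_assoc, he.eq]

theorem IsIdempotentElem.mul_mul_self_mul {e : R} (he : IsIdempotentElem e) (y : R) :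
    e * y * e * e = e * y * e := by
  rw [mul_assoc _ e, he.eq]

theorem IsIdempotentElem.commute_mul_mul {e : R} (he : IsIdempotentElem e) (y : R) :
    Commute (e * y * e) e :=
  (he.mul_mul_self_mul y).trans (he.mul_mul_mul_self y).symm

theorem commute_mul_pow_mul_of_mul_eq {e c : R} (hec : e * c = c) (hce : c * e = c) (k : ℕ) :
    Commute (e * c ^ k * e) c :=
  calc e * c ^ k * e * c = e * c ^ (k + 1) := by rw [mul_assoc _ e, hec, mul_assoc, pow_succ]
    _ = c ^ (k + 1) := by rw [pow_succ', ← mul_assoc, hec]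
    _ = c ^ (k + 1) * e := by rw [pow_succ, mul_assoc, hce]
    _ = c * (e * c ^ k * e) := by rw [← mul_assoc, ← mul_assoc, hce, pow_succ']

theorem mul_mul_mul_conj_eq_of_commute {e x u v : R} (hvu : v * u = 1)
    (hu : Commute e u) (hv : Commute e v) (hxv : Commute (e * x * e) v) :
    e * (v * x * u) * e = e * x * e :=
  calc e * (v * x * u) * e = v * (e * x * e) * u := by
        simp only [← mul_assoc, hv.eq]; simp only [mul_assoc, hu.eq]
    _ = e * x * e := by rw [← hxv.eq, mul_assoc, hvu, mul_one]

end Monoid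

theorem Matrix.exp_neg_mul_exp {m 𝔸 : Type*} [Fintype m] [DecidableEq m] [NormedRing 𝔸]
    [NormedAlgebra ℚ 𝔸] [CompleteSpace 𝔸] (A : Matrix m m 𝔸) :
    NormedSpace.exp (-A) * NormedSpace.exp A = 1 := by
  rw [← Matrix.exp_add_of_commute _ _ (Commute.refl A).neg_left, neg_add_cancel,
    NormedSpace.exp_zero]

section Cutoff

variable {n : ℕ}

theorem cutoff_one (i : ℕ) :
    cutoff n 1 i = diagonal fun a : Fin n => if (a : ℕ) < i then 1 else 0 := by
  ext a b
  by_cases hab : a = b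
  · subst hab; simp [cutoff]
  · simp [cutoff, hab]

theorem isIdempotentElem_cutoff_one (i : ℕ) : IsIdempotentElem (cutoff n 1 i) := by
  rw [cutoff_one, IsIdempotentElem, diagonal_mul_diagonal]
  congr 1
  ext a
  split_ifs <;> simp

theorem cutoff_eq_mul_mul (y : Matrix (Fin n) (Fin n) ℂ) (i : ℕ) :
    cutoff n y i = cutoff n 1 i * y * cutoff n 1 i := by
  ext a b
  rw [cutoff_one, mul_diagonal, diagonal_mul]
  by_cases ha : (a : ℕ) < i <;> by_cases hb : (b : ℕ) < i <;> simp [cutoff, ha, hb]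

theorem blkpow_eq_mul_mul (x : Matrix (Fin n) (Fin n) ℂ) (i k : ℕ) :
    blkpow n x i k = cutoff n 1 i * cutoff n x i ^ k * cutoff n 1 i :=
  cutoff_eq_mul_mul _ _

theorem commute_blkpow_cutoff_one (x : Matrix (Fin n) (Fin n) ℂ) (i k : ℕ) :
    Commute (blkpow n x i k) (cutoff n 1 i) := by
  rw [blkpow_eq_mul_mul]
  exact (isIdempotentElem_cutoff_one i).commute_mul_mul _

theorem commute_blkpow_cutoff (x : Matrix (Fin n) (Fin n) ℂ) (i k : ℕ) :
    Commute (blkpow n x i k) (cutoff n x i) := by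
  have he := isIdempotentElem_cutoff_one (n := n) i
  rw [blkpow_eq_mul_mul, cutoff_eq_mul_mul x]
  exact commute_mul_pow_mul_of_mul_eq (he.mul_mul_mul_self x) (he.mul_mul_self_mul x) k

end Cutoff

theorem cutoff_invariant_under_flow_general (n i j : ℕ)
    (x : Matrix (Fin n) (Fin n) ℂ) (t : ℂ) :
    cutoff n
      (NormedSpace.exp (-(t • ((j : ℂ) • blkpow n x i (j - 1)))) * x *
        NormedSpace.exp (t • ((j : ℂ) • blkpow n x i (j - 1)))) i
      = cutoff n x i := by
  set M := t • ((j : ℂ) • blkpow n x i (j - 1))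
  have hME : Commute M (cutoff n 1 i) :=
    ((commute_blkpow_cutoff_one x i _).smul_left _).smul_left _
  have hMC : Commute M (cutoff n x i) :=
    ((commute_blkpow_cutoff x i _).smul_left _).smul_left _
  rw [cutoff_eq_mul_mul x] at hMC
  rw [cutoff_eq_mul_mul _ i, cutoff_eq_mul_mul x i]
  exact mul_mul_mul_conj_eq_of_commute (Matrix.exp_neg_mul_exp M)
    hME.exp_left.symm hME.neg_left.exp_left.symm hMC.neg_left.exp_left.symm

/-- For `f_{i,j}(x) = tr((x_i)^j)` with `i < n`, the curve
`t ↦ Ad(exp(-t·j·(x_i)^{j-1}))·x` leaves the `i×i` cutoff of `x` unchanged. -/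
theorem cutoff_invariant_under_flow (n i j : ℕ) (hi : i < n) (hj : 1 ≤ j)
    (x : Matrix (Fin n) (Fin n) ℂ) (t : ℂ) :
    cutoff n
      (NormedSpace.exp (-(t • ((j : ℂ) • blkpow n x i (j - 1)))) * x *
        NormedSpace.exp (t • ((j : ℂ) • blkpow n x i (j - 1)))) i
      = cutoff n x i :=
  cutoff_invariant_under_flow_general n i j x t
end

section
/- The flows t ↦ Ad(exp(-t·j·(x_i)^{j-1}))·x and s ↦ Ad(exp(-s·k·(x_m)^{k-1}))·x associated to the functions f_{i,j}(x) = trace((x_i)^j) and f_{m,k}(x) = trace((x_m)^k) on gl(n,ℂ) commute for all i, m < n and all j, k: applying them in either order to any x ∈ gl(n,ℂ) yields the same result. -/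
/-!
Let `i ≤ m` and let `u = exp(t·j·(x_i)^{j-1})`, so that the `(i,j)`-flow sends `x` to
`u⁻¹ x u`. Since the generator lives in the `i×i` corner, `u` is block diagonal for the
split at `m`, and the `(m,k)`-flow is equivariant under conjugation by such units. On the
other hand the `(m,k)`-flow conjugates `x` by the exponential of a polynomial in `x_m`,
which commutes with `x_m`; so it fixes `x_m`, hence `x_i`, hence the generator of the
`(i,j)`-flow. Both composites therefore equal `u⁻¹ y u`, where `y` is the image of `x`
under the `(m,k)`-flow.
-/

open Matrix

/-- The time-`t` flow `x ↦ Ad(exp(-t·j·(x_i)^{j-1}))·x` of the Gelfand-Zeitlin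
vector field associated to `f_{i,j}(x) = tr((x_i)^j)`. -/
noncomputable def gzFlow (n i j : ℕ) (t : ℂ) (x : Matrix (Fin n) (Fin n) ℂ) : Matrix (Fin n) (Fin n) ℂ :=
  NormedSpace.exp (-(t • ((j : ℂ) • blkpow n x i (j - 1)))) * x *
    NormedSpace.exp (t • ((j : ℂ) • blkpow n x i (j - 1)))

def cornerProj (n i : ℕ) : Matrix (Fin n) (Fin n) ℂ :=
  diagonal fun a => if (a : ℕ) < i then 1 else 0

def gzGenerator (n i j : ℕ) (t : ℂ) (x : Matrix (Fin n) (Fin n) ℂ) :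
    Matrix (Fin n) (Fin n) ℂ :=
  t • ((j : ℂ) • blkpow n x i (j - 1))

noncomputable def expUnit {n : ℕ} (Z : Matrix (Fin n) (Fin n) ℂ) :
    (Matrix (Fin n) (Fin n) ℂ)ˣ where
  val := NormedSpace.exp Z
  inv := NormedSpace.exp (-Z)
  val_inv := by
    rw [← Matrix.exp_add_of_commute _ _ (Commute.neg_right (Commute.refl Z)), add_neg_cancel,
      NormedSpace.exp_zero]
  inv_val := by
    rw [← Matrix.exp_add_of_commute _ _ (Commute.neg_left (Commute.refl Z)), neg_add_cancel,
      NormedSpace.exp_zero]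

section

variable {n : ℕ}

theorem cutoff_eq_cornerProj_mul (x : Matrix (Fin n) (Fin n) ℂ) (i : ℕ) :
    cutoff n x i = cornerProj n i * x * cornerProj n i := by
  ext a b
  simp only [cutoff, cornerProj, of_apply, diagonal_mul, mul_diagonal]
  split_ifs <;> simp_all

theorem cornerProj_mul_cornerProj (i m : ℕ) :
    cornerProj n i * cornerProj n m = cornerProj n (min i m) := by
  simp only [cornerProj, diagonal_mul_diagonal, lt_min_iff, ite_mul, one_mul, zero_mul]
  congr 1
  funext a
  split_ifs <;> simp_all

theorem cutoff_cutoff_of_le {i m : ℕ} (h : i ≤ m) (x : Matrix (Fin n) (Fin n) ℂ) :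
    cutoff n (cutoff n x m) i = cutoff n x i := by
  rw [cutoff_eq_cornerProj_mul, cutoff_eq_cornerProj_mul, cutoff_eq_cornerProj_mul, ← mul_assoc,
    ← mul_assoc, cornerProj_mul_cornerProj, min_eq_left h, mul_assoc _ (cornerProj n m),
    cornerProj_mul_cornerProj, min_eq_right h]

theorem commute_cornerProj_cutoff {i m : ℕ} (h : i ≤ m) (x : Matrix (Fin n) (Fin n) ℂ) :
    Commute (cornerProj n m) (cutoff n x i) := by
  rw [cutoff_eq_cornerProj_mul, Commute, SemiconjBy, ← mul_assoc, ← mul_assoc,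
    cornerProj_mul_cornerProj, min_eq_right h, mul_assoc _ (cornerProj n i),
    cornerProj_mul_cornerProj, min_eq_left h]

theorem commute_cutoff_blkpow (x : Matrix (Fin n) (Fin n) ℂ) (m l : ℕ) :
    Commute (cutoff n x m) (blkpow n x m l) := by
  have hP : Commute (cutoff n x m) (cornerProj n m) := (commute_cornerProj_cutoff le_rfl x).symm
  rw [blkpow, cutoff_eq_cornerProj_mul (cutoff n x m ^ l)]
  exact (hP.mul_right ((Commute.refl _).pow_right l)).mul_right hP

theorem cutoff_units_conj {m : ℕ} (u : (Matrix (Fin n) (Fin n) ℂ)ˣ)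
    (hu : Commute (cornerProj n m) u) (x : Matrix (Fin n) (Fin n) ℂ) :
    cutoff n (u⁻¹ * x * u) m = u⁻¹ * cutoff n x m * u := by
  simp only [cutoff_eq_cornerProj_mul]
  calc cornerProj n m * (u⁻¹ * x * u) * cornerProj n m
      = (cornerProj n m * ↑u⁻¹) * x * (↑u * cornerProj n m) := by simp only [mul_assoc]
    _ = u⁻¹ * (cornerProj n m * x * cornerProj n m) * u := by
      rw [hu.units_inv_right.eq, ← hu.eq]; simp only [mul_assoc]

theorem blkpow_units_conj {m : ℕ} (u : (Matrix (Fin n) (Fin n) ℂ)ˣ)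
    (hu : Commute (cornerProj n m) u) (x : Matrix (Fin n) (Fin n) ℂ) (l : ℕ) :
    blkpow n (u⁻¹ * x * u) m l = u⁻¹ * blkpow n x m l * u := by
  rw [blkpow, blkpow, cutoff_units_conj u hu, Units.conj_pow', cutoff_units_conj u hu]

theorem gzGenerator_units_conj {m : ℕ} (u : (Matrix (Fin n) (Fin n) ℂ)ˣ)
    (hu : Commute (cornerProj n m) u) (k : ℕ) (s : ℂ) (x : Matrix (Fin n) (Fin n) ℂ) :
    gzGenerator n m k s (u⁻¹ * x * u) = u⁻¹ * gzGenerator n m k s x * u := by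
  simp only [gzGenerator, blkpow_units_conj u hu, Matrix.mul_smul, Matrix.smul_mul]

theorem expUnit_units_conj (u : (Matrix (Fin n) (Fin n) ℂ)ˣ) (Z : Matrix (Fin n) (Fin n) ℂ) :
    expUnit (u⁻¹ * Z * u : Matrix (Fin n) (Fin n) ℂ) = u⁻¹ * expUnit Z * u :=
  Units.ext (Matrix.exp_units_conj' u Z)

theorem gzFlow_eq_units_conj (i j : ℕ) (t : ℂ) (x : Matrix (Fin n) (Fin n) ℂ) :
    gzFlow n i j t x =
      (expUnit (gzGenerator n i j t x))⁻¹ * x * expUnit (gzGenerator n i j t x) :=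
  rfl

theorem gzFlow_units_conj {m : ℕ} (u : (Matrix (Fin n) (Fin n) ℂ)ˣ)
    (hu : Commute (cornerProj n m) u) (k : ℕ) (s : ℂ) (x : Matrix (Fin n) (Fin n) ℂ) :
    gzFlow n m k s (u⁻¹ * x * u) = u⁻¹ * gzFlow n m k s x * u := by
  rw [gzFlow_eq_units_conj, gzFlow_eq_units_conj, gzGenerator_units_conj u hu, expUnit_units_conj]
  simp only [_root_.mul_inv_rev, inv_inv, Units.val_mul, mul_assoc, Units.mul_inv_cancel_left]

theorem commute_cornerProj_expUnit {i m : ℕ} (h : i ≤ m) (j : ℕ) (t : ℂ)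
    (x : Matrix (Fin n) (Fin n) ℂ) :
    Commute (cornerProj n m) (expUnit (gzGenerator n i j t x)) :=
  (((commute_cornerProj_cutoff h _).smul_right _).smul_right _).exp_right

theorem cutoff_gzFlow_self (m k : ℕ) (s : ℂ) (x : Matrix (Fin n) (Fin n) ℂ) :
    cutoff n (gzFlow n m k s x) m = cutoff n x m := by
  have hx : Commute (cutoff n x m) (expUnit (gzGenerator n m k s x)) :=
    (((commute_cutoff_blkpow x m (k - 1)).smul_right _).smul_right _).exp_right
  rw [gzFlow_eq_units_conj, cutoff_units_conj _ (commute_cornerProj_expUnit le_rfl k s x),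
    mul_assoc, hx.eq, Units.inv_mul_cancel_left]

theorem gzGenerator_gzFlow_of_le {i m : ℕ} (h : i ≤ m) (j k : ℕ) (t s : ℂ)
    (x : Matrix (Fin n) (Fin n) ℂ) :
    gzGenerator n i j t (gzFlow n m k s x) = gzGenerator n i j t x := by
  rw [gzGenerator, gzGenerator, blkpow, blkpow, ← cutoff_cutoff_of_le h (gzFlow n m k s x),
    cutoff_gzFlow_self, cutoff_cutoff_of_le h]

theorem gzFlows_commute_of_le {i m : ℕ} (h : i ≤ m) (j k : ℕ) (t s : ℂ)
    (x : Matrix (Fin n) (Fin n) ℂ) :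
    gzFlow n i j t (gzFlow n m k s x) = gzFlow n m k s (gzFlow n i j t x) := by
  rw [gzFlow_eq_units_conj i j t (gzFlow n m k s x), gzGenerator_gzFlow_of_le h,
    gzFlow_eq_units_conj i j t x, gzFlow_units_conj _ (commute_cornerProj_expUnit h j t x)]

end

theorem gzFlows_commute_general (n i m j k : ℕ) (t s : ℂ) (x : Matrix (Fin n) (Fin n) ℂ) :
    gzFlow n i j t (gzFlow n m k s x) = gzFlow n m k s (gzFlow n i j t x) := by
  rcases le_total i m with h | h
  · exact gzFlows_commute_of_le h j k t s x
  · exact (gzFlows_commute_of_le h k j s t x).symm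

/-- The flows associated to `f_{i,j}(x) = tr((x_i)^j)` and `f_{m,k}(x) = tr((x_m)^k)`
commute: applying them in either order to any `x ∈ gl(n,ℂ)` gives the same result. -/
theorem gzFlows_commute (n i m j k : ℕ) (hi : i < n) (hm : m < n)
    (hj : 1 ≤ j) (hk : 1 ≤ k) (t s : ℂ) (x : Matrix (Fin n) (Fin n) ℂ) :
    gzFlow n i j t (gzFlow n m k s x) = gzFlow n m k s (gzFlow n i j t x) :=
  gzFlows_commute_general n i m j k t s x
end

section
/- Let x ∈ gl(n,ℂ) be such that for every 1 ≤ i ≤ n-1, the centralizers satisfy z_{gl(i)}(x_i) ∩ z_{gl(i+1)}(x_{i+1}) = 0 (where gl(i) embeds in gl(i+1) as top-left block). Then the sum ∑_{i=1}^{n} z_{gl(i)}(x_i) inside gl(n,ℂ) is direct. -/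
open Matrix

/-- `z` is a member of the centralizer `z_{gl(i)}(x_i)` of `x_i` in `gl(i)`,
regarded as a subspace of `gl(n)` via the top-left block embedding:
`z` is supported in the top-left `i×i` block and commutes with `x_i`. -/
def memCent (n : ℕ) (x : Matrix (Fin n) (Fin n) ℂ) (i : ℕ)
    (z : Matrix (Fin n) (Fin n) ℂ) : Prop :=
  (∀ a b : Fin n, ¬((a : ℕ) < i ∧ (b : ℕ) < i) → z a b = 0) ∧
    z * cutoff n x i = cutoff n x i * z

/- Writing `p = blockProj i` for the projection onto the first `i` coordinates, `x_i = p x p` and a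
matrix `z` supported in the `i×i` block satisfies `p z = z = z p`. Hence if such a `z` commutes
with `x_j` for some `j ≥ i`, it commutes with `p x_j p = x_i`. In a vanishing sum
`∑_{i ≤ k+1} f i`, the top summand `f (k+1) = -∑_{i ≤ k} f i` is supported in the `k×k` block, so
it lies in both `z(x_k)` and `z(x_{k+1})` and vanishes; descend on `k`. -/

theorem Commute.compression_of_compression {M : Type*} [Semigroup M] {p q y z : M}
    (hpq : p * q = p) (hqp : q * p = p) (hpz : p * z = z) (hzp : z * p = z)
    (h : Commute z (q * y * q)) : Commute z (p * y * p) :=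
  have hzq : z * q = z := by rw [← hzp, mul_assoc, hpq]
  have hqz : q * z = z := by rw [← hpz, ← mul_assoc, hqp]
  calc z * (p * y * p) = p * (z * (q * y * q)) * p := by
        simp only [mul_assoc]
        rw [hqp, ← mul_assoc p z, hpz, ← mul_assoc z q, hzq, ← mul_assoc z p, hzp]
    _ = p * (q * y * q * z) * p := by rw [h.eq]
    _ = p * y * p * z := by
        simp only [mul_assoc]
        rw [hzp, hqz, ← mul_assoc p q, hpq, hpz]

section BlockSupport

variable {R : Type*} [Semiring R] {n : ℕ}

def blockProj (R : Type*) [Semiring R] (n i : ℕ) : Matrix (Fin n) (Fin n) R :=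
  diagonal fun a => if (a : ℕ) < i then 1 else 0

def blockSupported (R : Type*) [Semiring R] (n i : ℕ) :
    Submodule R (Matrix (Fin n) (Fin n) R) where
  carrier := {z | ∀ a b : Fin n, ¬((a : ℕ) < i ∧ (b : ℕ) < i) → z a b = 0}
  add_mem' hz hw a b hab := by simp [hz a b hab, hw a b hab]
  zero_mem' _ _ _ := rfl
  smul_mem' c z hz a b hab := by simp [hz a b hab]

theorem blockSupported_mono {i j : ℕ} (hij : i ≤ j) :
    blockSupported R n i ≤ blockSupported R n j :=
  fun _ hz a b hab => hz a b fun h => hab ⟨h.1.trans_le hij, h.2.trans_le hij⟩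

theorem blockProj_mul_blockProj (i j : ℕ) :
    blockProj R n i * blockProj R n j = blockProj R n (min i j) := by
  rw [blockProj, blockProj, blockProj, diagonal_mul_diagonal]
  congr 1
  funext a
  by_cases hi : (a : ℕ) < i <;> by_cases hj : (a : ℕ) < j <;> simp [hi, hj]

theorem blockProj_mul_of_mem {i : ℕ} {z : Matrix (Fin n) (Fin n) R}
    (hz : z ∈ blockSupported R n i) : blockProj R n i * z = z := by
  ext a b
  by_cases ha : (a : ℕ) < i
  · simp [blockProj, diagonal_mul, ha]
  · simp [blockProj, diagonal_mul, ha, hz a b (by tauto)]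

theorem mul_blockProj_of_mem {i : ℕ} {z : Matrix (Fin n) (Fin n) R}
    (hz : z ∈ blockSupported R n i) : z * blockProj R n i = z := by
  ext a b
  by_cases hb : (b : ℕ) < i
  · simp [blockProj, mul_diagonal, hb]
  · simp [blockProj, mul_diagonal, hb, hz a b (by tauto)]

theorem sum_Icc_mem_blockSupported {f : ℕ → Matrix (Fin n) (Fin n) R} {k : ℕ}
    (hf : ∀ i ∈ Finset.Icc 1 k, f i ∈ blockSupported R n i) :
    ∑ i ∈ Finset.Icc 1 k, f i ∈ blockSupported R n k :=
  Submodule.sum_mem _ fun i hi =>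
    blockSupported_mono (Finset.mem_Icc.mp hi).2 (hf i hi)

end BlockSupport

theorem cutoff_eq_blockProj_mul_mul_blockProj (n : ℕ) (x : Matrix (Fin n) (Fin n) ℂ) (i : ℕ) :
    cutoff n x i = blockProj ℂ n i * x * blockProj ℂ n i := by
  ext a b
  by_cases ha : (a : ℕ) < i <;> by_cases hb : (b : ℕ) < i <;>
    simp [cutoff, blockProj, diagonal_mul, mul_diagonal, ha, hb]

theorem memCent_iff {n : ℕ} {x z : Matrix (Fin n) (Fin n) ℂ} {i : ℕ} :
    memCent n x i z ↔ z ∈ blockSupported ℂ n i ∧ Commute z (cutoff n x i) :=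
  Iff.rfl

theorem memCent_of_le {n : ℕ} {x z : Matrix (Fin n) (Fin n) ℂ} {i j : ℕ} (hij : i ≤ j)
    (hz : z ∈ blockSupported ℂ n i) (hzj : memCent n x j z) : memCent n x i z := by
  refine memCent_iff.mpr ⟨hz, ?_⟩
  have hcomm := (memCent_iff.mp hzj).2
  rw [cutoff_eq_blockProj_mul_mul_blockProj] at hcomm ⊢
  exact hcomm.compression_of_compression
    (by rw [blockProj_mul_blockProj, min_eq_left hij])
    (by rw [blockProj_mul_blockProj, min_eq_right hij])
    (blockProj_mul_of_mem hz) (mul_blockProj_of_mem hz)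

theorem eq_zero_of_sum_Icc_add_eq_zero {n : ℕ} {x : Matrix (Fin n) (Fin n) ℂ}
    {f : ℕ → Matrix (Fin n) (Fin n) ℂ} {k : ℕ}
    (hint : 0 < k → ∀ z, memCent n x k z → memCent n x (k + 1) z → z = 0)
    (hf : ∀ i ∈ Finset.Icc 1 (k + 1), memCent n x i (f i))
    (hsum : ∑ i ∈ Finset.Icc 1 k, f i + f (k + 1) = 0) : f (k + 1) = 0 := by
  rcases Nat.eq_zero_or_pos k with rfl | hk
  · simpa using hsum
  have hsupp : f (k + 1) ∈ blockSupported ℂ n k := by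
    rw [eq_neg_of_add_eq_zero_right hsum]
    exact neg_mem (sum_Icc_mem_blockSupported fun i hi =>
      (hf i (Finset.Icc_subset_Icc_right k.le_succ hi)).1)
  have hf_top := hf (k + 1) (Finset.mem_Icc.mpr ⟨by omega, le_rfl⟩)
  exact hint hk _ (memCent_of_le k.le_succ hsupp hf_top) hf_top

/-- If for every `1 ≤ i ≤ n-1` the centralizers satisfy
`z_{gl(i)}(x_i) ∩ z_{gl(i+1)}(x_{i+1}) = 0`, then the sum
`∑_{i=1}^{n} z_{gl(i)}(x_i)` inside `gl(n,ℂ)` is direct: the only way to write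
`0` as a sum of elements of the centralizers is with all summands zero. -/
theorem centralizer_sum_direct (n : ℕ) (x : Matrix (Fin n) (Fin n) ℂ)
    (hint : ∀ i ∈ Finset.Icc 1 (n - 1), ∀ z : Matrix (Fin n) (Fin n) ℂ,
      memCent n x i z → memCent n x (i + 1) z → z = 0) :
    ∀ f : ℕ → Matrix (Fin n) (Fin n) ℂ,
      (∀ i ∈ Finset.Icc 1 n, memCent n x i (f i)) →
      (∑ i ∈ Finset.Icc 1 n, f i) = 0 →
      ∀ i ∈ Finset.Icc 1 n, f i = 0 := by
  intro f hf
  suffices ∀ k ≤ n, ∑ i ∈ Finset.Icc 1 k, f i = 0 → ∀ i ∈ Finset.Icc 1 k, f i = 0 from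
    this n le_rfl
  intro k
  induction k with
  | zero => simp
  | succ k ih =>
    intro hk hsum
    rw [Finset.sum_Icc_succ_top (by omega)] at hsum
    have htop : f (k + 1) = 0 :=
      eq_zero_of_sum_Icc_add_eq_zero (fun hk0 => hint k (Finset.mem_Icc.mpr ⟨hk0, by omega⟩))
        (fun i hi => hf i (Finset.Icc_subset_Icc_right hk hi)) hsum
    rw [htop, add_zero] at hsum
    intro i hi
    rcases (Finset.mem_Icc.mp hi).2.lt_or_eq with hlt | rfl
    · exact ih (by omega) hsum i (Finset.mem_Icc.mpr ⟨(Finset.mem_Icc.mp hi).1, by omega⟩)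
    · exact htop
end

section
/- Let z_{i1},...,z_{im} be nonzero elements with z_{ij} ∈ gl(i_j) embedded in gl(n,ℂ) for an increasing sequence i_1 < ... < i_m ≤ n, such that each z_{ij} centralizes x_{i_j} and ∑_j z_{ij} = 0. Then z_{i1} centralizes x_{i_1+1}; that is, z_{i1} ∈ z_{gl(i_1)}(x_{i_1}) ∩ z_{gl(i_1+1)}(x_{i_1+1}). -/
open Matrix

/-!
Write `P_k` for the diagonal projection onto the first `k` coordinates, so that the cutoff
`x_k` is `P_k x P_k`, and put `i = i₁`, `E = P_{i+1} - P_i`. Since `z_{i₁}` lives in the corner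
`P_i`, it commutes with `x_{i+1}` as soon as the off-diagonal blocks `P_i [z_{i₁}, x] E` and
`E [z_{i₁}, x] P_i` vanish. For `j > 1` the corresponding blocks of `[z_{i_j}, x]` vanish
because `P_i, E ≤ P_{i_j}` and `z_{i_j}` commutes with `P_{i_j} x P_{i_j}`; as the commutator
is additive and `∑ z_{i_j} = 0`, they vanish for `j = 1` as well.
-/

section Corner

variable {A : Type*} [Ring A] {a b p q r x z : A}

theorem commute_corner_iff (hl : r * z = z) (hr : z * r = z) :
    Commute z (r * x * r) ↔ z * x * r = r * x * z := by
  rw [Commute, SemiconjBy, ← mul_assoc, ← mul_assoc, hr, mul_assoc (r * x), hl]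

theorem mul_commutator_mul_eq_zero (ha : a * r = a) (hb : r * b = b) (hz : z * x * r = r * x * z) :
    a * (z * x - x * z) * b = 0 := by
  calc a * (z * x - x * z) * b = a * (z * x * r) * b - a * r * x * z * b := by
        rw [ha]; simp only [mul_sub, sub_mul, mul_assoc, hb]
    _ = 0 := by rw [hz]; simp only [mul_assoc, sub_self]

theorem commute_of_offDiag_blocks_eq_zero (hl : p * z = z) (hr : z * p = z)
    (hpq : p * q = p) (hqp : q * p = p) (hc : Commute z (p * x * p))
    (h₁ : p * (z * x - x * z) * (q - p) = 0) (h₂ : (q - p) * (z * x - x * z) * p = 0) :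
    Commute z (q * x * q) := by
  have hzq : z * q = z := by rw [← hr, mul_assoc, hpq]
  have hqz : q * z = z := by rw [← hl, ← mul_assoc, hqp]
  have hzd : z * (q - p) = 0 := by rw [mul_sub, hzq, hr, sub_self]
  have hdz : (q - p) * z = 0 := by rw [sub_mul, hqz, hl, sub_self]
  have hzx : z * x * (q - p) = 0 :=
    calc z * x * (q - p) = p * z * x * (q - p) - p * x * (z * (q - p)) := by
          rw [hzd, hl, mul_zero, sub_zero]
      _ = p * (z * x - x * z) * (q - p) := by noncomm_ring
      _ = 0 := h₁
  have hxz : (q - p) * x * z = 0 :=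
    calc (q - p) * x * z = -((q - p) * z * x * p - (q - p) * x * (z * p)) := by
          rw [hdz, hr, zero_mul, zero_mul, zero_sub, neg_neg]
      _ = -((q - p) * (z * x - x * z) * p) := by noncomm_ring
      _ = 0 := by rw [h₂, neg_zero]
  rw [commute_corner_iff hqz hzq]
  calc z * x * q = z * x * p + z * x * (q - p) := by noncomm_ring
    _ = p * x * z + (q - p) * x * z := by rw [(commute_corner_iff hl hr).1 hc, hzx, hxz]
    _ = q * x * z := by noncomm_ring

theorem commute_of_sum_eq_zero_of_corners {ι : Type*} [Fintype ι] (z r : ι → A) (j₀ : ι)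
    (hsum : ∑ j, z j = 0) (hl : ∀ j, r j * z j = z j) (hr : ∀ j, z j * r j = z j)
    (hc : ∀ j, Commute (z j) (r j * x * r j))
    (hpq : r j₀ * q = r j₀) (hqp : q * r j₀ = r j₀)
    (hqr : ∀ j ≠ j₀, q * r j = q) (hrq : ∀ j ≠ j₀, r j * q = q) :
    Commute (z j₀) (q * x * q) := by
  set p := r j₀
  have hpr : ∀ j ≠ j₀, p * r j = p := fun j hj => by rw [← hpq, mul_assoc, hqr j hj]
  have hrp : ∀ j ≠ j₀, r j * p = p := fun j hj => by rw [← hqp, ← mul_assoc, hrq j hj]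
  have hcomm j := (commute_corner_iff (hl j) (hr j)).1 (hc j)
  have block_eq_zero (a b : A) (hblock : ∀ j ≠ j₀, a * r j = a ∧ r j * b = b) :
      a * (z j₀ * x - x * z j₀) * b = 0 := by
    rw [← Finset.sum_eq_single_of_mem j₀ (Finset.mem_univ _)
      fun j _ hj => mul_commutator_mul_eq_zero (hblock j hj).1 (hblock j hj).2 (hcomm j),
      ← Finset.sum_mul, ← Finset.mul_sum, Finset.sum_sub_distrib, ← Finset.sum_mul, ← Finset.mul_sum,
      hsum, zero_mul, mul_zero, sub_zero, mul_zero, zero_mul]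
  refine commute_of_offDiag_blocks_eq_zero (hl j₀) (hr j₀) hpq hqp (hc j₀) ?_ ?_
  · exact block_eq_zero _ _ fun j hj => ⟨hpr j hj, by rw [mul_sub, hrq j hj, hrp j hj]⟩
  · exact block_eq_zero _ _ fun j hj => ⟨by rw [sub_mul, hqr j hj, hpr j hj], hrp j hj⟩

end Corner

def cutoffProj (R : Type*) [Semiring R] (n k : ℕ) : Matrix (Fin n) (Fin n) R :=
  diagonal fun a => if (a : ℕ) < k then 1 else 0

section CutoffProj

variable {R : Type*} [Semiring R] {n : ℕ}

theorem cutoffProj_mul_cutoffProj_of_le {k l : ℕ} (h : k ≤ l) :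
    cutoffProj R n k * cutoffProj R n l = cutoffProj R n k ∧
      cutoffProj R n l * cutoffProj R n k = cutoffProj R n k := by
  simp only [cutoffProj, diagonal_mul_diagonal]
  constructor <;> congr 1 <;> funext a <;> split_ifs <;> first | omega | simp

theorem cutoffProj_mul_of_support {k : ℕ} {z : Matrix (Fin n) (Fin n) R}
    (hz : ∀ a b : Fin n, ¬((a : ℕ) < k ∧ (b : ℕ) < k) → z a b = 0) :
    cutoffProj R n k * z = z ∧ z * cutoffProj R n k = z := by
  constructor <;> ext a b <;> simp only [cutoffProj, diagonal_mul, mul_diagonal] <;>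
    split_ifs <;> simp_all

theorem cutoff_eq_cutoffProj_mul (x : Matrix (Fin n) (Fin n) ℂ) (k : ℕ) :
    cutoff n x k = cutoffProj ℂ n k * x * cutoffProj ℂ n k := by
  ext a b
  simp only [cutoff, cutoffProj, of_apply, mul_diagonal, diagonal_mul]
  split_ifs <;> simp_all

end CutoffProj

theorem first_summand_centralizes_next_general (n m : ℕ) (hm : 0 < m)
    (idx : Fin m → ℕ) (hmono : StrictMono idx)
    (x : Matrix (Fin n) (Fin n) ℂ)
    (z : Fin m → Matrix (Fin n) (Fin n) ℂ)
    (hsupp : ∀ j, ∀ a b : Fin n, ¬((a : ℕ) < idx j ∧ (b : ℕ) < idx j) → z j a b = 0)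
    (hcent : ∀ j, z j * cutoff n x (idx j) = cutoff n x (idx j) * z j)
    (hsum : (∑ j, z j) = 0) :
    z ⟨0, hm⟩ * cutoff n x (idx ⟨0, hm⟩ + 1) = cutoff n x (idx ⟨0, hm⟩ + 1) * z ⟨0, hm⟩ := by
  set j₀ : Fin m := ⟨0, hm⟩
  have hlt : ∀ j ≠ j₀, idx j₀ + 1 ≤ idx j := fun j hj =>
    hmono (show j₀ < j from Nat.pos_of_ne_zero fun h => hj (Fin.ext h))
  simp only [cutoff_eq_cutoffProj_mul] at hcent ⊢
  have hsucc := cutoffProj_mul_cutoffProj_of_le (R := ℂ) (n := n) (Nat.le_succ (idx j₀))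
  exact commute_of_sum_eq_zero_of_corners z (fun j => cutoffProj ℂ n (idx j)) j₀ hsum
    (fun j => (cutoffProj_mul_of_support (hsupp j)).1)
    (fun j => (cutoffProj_mul_of_support (hsupp j)).2) hcent hsucc.1 hsucc.2
    (fun j hj => (cutoffProj_mul_cutoffProj_of_le (hlt j hj)).1)
    (fun j hj => (cutoffProj_mul_cutoffProj_of_le (hlt j hj)).2)

/-- Let `i_1 < i_2 < ⋯ < i_m ≤ n` and let `z_j ∈ gl(i_j) ⊆ gl(n,ℂ)` be nonzero
elements with `[z_j, x_{i_j}] = 0` and `∑_j z_j = 0`.  Then `z_1` also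
centralizes `x_{i_1 + 1}`; i.e. `z_1 ∈ z_{gl(i_1)}(x_{i_1}) ∩ z_{gl(i_1+1)}(x_{i_1+1})`. -/
theorem first_summand_centralizes_next (n m : ℕ) (hm : 0 < m)
    (idx : Fin m → ℕ) (hmono : StrictMono idx) (hle : ∀ j, idx j ≤ n)
    (x : Matrix (Fin n) (Fin n) ℂ)
    (z : Fin m → Matrix (Fin n) (Fin n) ℂ)
    (hne : ∀ j, z j ≠ 0)
    (hsupp : ∀ j, ∀ a b : Fin n, ¬((a : ℕ) < idx j ∧ (b : ℕ) < idx j) → z j a b = 0)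
    (hcent : ∀ j, z j * cutoff n x (idx j) = cutoff n x (idx j) * z j)
    (hsum : (∑ j, z j) = 0) :
    z ⟨0, hm⟩ * cutoff n x (idx ⟨0, hm⟩ + 1) = cutoff n x (idx ⟨0, hm⟩ + 1) * z ⟨0, hm⟩ :=
  first_summand_centralizes_next_general n m hm idx hmono x z hsupp hcent hsum
end

section
/- Let h = ⊕_{i=1}^{l} a_i J ∈ so(2l,ℂ) with J = [[0,1],[-1,0]], and let Y ∈ so(2l+1,ℂ) have h as top-left 2l×2l block, last column (z_{11}, z_{12}, ..., z_{l1}, z_{l2}, 0)ᵀ and last row its negative transpose. Then det(t·I - Y) = t·[∏_{i=1}^{l}(t² + a_i²) + ∑_{i=1}^{l}(z_{i1}² + z_{i2}²) ∏_{j≠i}(t² + a_j²)]. -/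
open Matrix Polynomial

/-- The bordered skew-symmetric matrix `Y ∈ so(2l+1,ℂ)` whose top-left `2l×2l`
block is `h = ⊕ᵢ aᵢ·J` (`J = [[0,1],[-1,0]]`), whose last column is
`(z_{11}, z_{12}, …, z_{l1}, z_{l2}, 0)ᵀ` (encoded by `w : Fin (2l) → ℂ`,
`w(2i) = z_{i+1,1}`, `w(2i+1) = z_{i+1,2}`), and whose last row is the
negative transpose. -/
def YB (l : ℕ) (a : Fin l → ℂ) (w : Fin (2 * l) → ℂ) :
    Matrix (Fin (2 * l + 1)) (Fin (2 * l + 1)) ℂ :=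
  Matrix.of fun p q =>
    if h1 : (q : ℕ) = (p : ℕ) + 1 ∧ (p : ℕ) % 2 = 0 ∧ (q : ℕ) < 2 * l then
      a ⟨(p : ℕ) / 2, by omega⟩
    else if h2 : (p : ℕ) = (q : ℕ) + 1 ∧ (q : ℕ) % 2 = 0 ∧ (p : ℕ) < 2 * l then
      -a ⟨(q : ℕ) / 2, by omega⟩
    else if h3 : (q : ℕ) = 2 * l ∧ (p : ℕ) < 2 * l then w ⟨(p : ℕ), by omega⟩
    else if h4 : (p : ℕ) = 2 * l ∧ (q : ℕ) < 2 * l then -w ⟨(q : ℕ), by omega⟩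
    else 0

/-!
After reordering the indices, `t • 1 - Y` is a bordered matrix whose top-left block is block
diagonal with `2 × 2` blocks `t • 1 - aᵢ • J = !![t, -aᵢ; aᵢ, t]` of determinant `t² + aᵢ²`.
When all of these are nonzero, the Schur complement gives
`det (t • 1 - Y) = ∏ᵢ (t² + aᵢ²) * (t + ∑ᵢ zᵢᵀ (t • 1 - aᵢ • J)⁻¹ zᵢ)` with
`zᵢ = (z_{i1}, z_{i2})`, and since `(t • 1 - a • J)⁻¹ = (t • 1 + a • J) / (t² + a²)` with `J` skew,
the `i`-th summand is `t (z_{i1}² + z_{i2}²) / (t² + aᵢ²)`. Both sides of the claim are polynomials that agree away from the finitely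
many roots of `∏ᵢ (X² + aᵢ²)`, hence they are equal.
-/

namespace Matrix

variable {m o R K : Type*} [Fintype m] [Fintype o] [DecidableEq o]

theorem inv_blockDiagonal [DecidableEq m] [CommRing R] {B : o → Matrix m m R}
    (hB : ∀ i, IsUnit (B i).det) :
    (blockDiagonal B)⁻¹ = blockDiagonal fun i => (B i)⁻¹ := by
  refine inv_eq_right_inv ?_
  rw [← blockDiagonal_mul, ← blockDiagonal_one]
  exact congrArg blockDiagonal (funext fun i => mul_nonsing_inv _ (hB i))

theorem dotProduct_blockDiagonal_mulVec [CommRing R] (B : o → Matrix m m R)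
    (u v : m × o → R) :
    u ⬝ᵥ (blockDiagonal B *ᵥ v) =
      ∑ i, (fun r => u (r, i)) ⬝ᵥ (B i *ᵥ fun r => v (r, i)) := by
  simp only [dotProduct, mulVec, Fintype.sum_prod_type, blockDiagonal_apply, Finset.mul_sum,
    ite_mul, zero_mul, Finset.sum_ite_eq, Finset.mem_univ, if_true]
  exact Finset.sum_comm

theorem det_fromBlocks_replicateCol_replicateRow [DecidableEq m] [CommRing R] {ι : Type*}
    [Unique ι] [Fintype ι] [DecidableEq ι] {A : Matrix m m R} (hA : IsUnit A.det)
    (u v : m → R) (d : Matrix ι ι R) :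
    (fromBlocks A (replicateCol ι u) (replicateRow ι v) d).det =
      A.det * (d default default - v ⬝ᵥ (A⁻¹ *ᵥ u)) := by
  let := A.invertibleOfIsUnitDet hA
  rw [det_fromBlocks₁₁, invOf_eq_nonsing_inv, det_unique (d - _), Matrix.mul_assoc,
    ← replicateCol_mulVec]
  rfl

theorem dotProduct_inv_mulVec_self_of_fin_two [Field K] (t x : K) (v : Fin 2 → K) :
    v ⬝ᵥ (!![t, -x; x, t]⁻¹ *ᵥ v) = t * (v 0 ^ 2 + v 1 ^ 2) / (t ^ 2 + x ^ 2) := by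
  rw [inv_def, adjugate_fin_two_of, det_fin_two_of, Ring.inverse_eq_inv']
  simp [dotProduct, mulVec, Fin.sum_univ_two]
  ring

end Matrix

theorem Polynomial.eq_of_eval_eq_of_eval_ne_zero {R : Type*} [CommRing R] [IsDomain R]
    [Infinite R] {p q d : R[X]} (hd : d ≠ 0) (h : ∀ t, d.eval t ≠ 0 → p.eval t = q.eval t) :
    p = q := by
  have : d * (p - q) = 0 := Polynomial.funext fun t => by
    by_cases ht : d.eval t = 0
    · simp [ht]
    · simp [h t ht]
  simpa [hd, sub_eq_zero] using this

def blockIndexEquiv (l : ℕ) : Fin 2 × Fin l ≃ Fin (2 * l) :=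
  (Equiv.prodComm _ _).trans (finProdFinEquiv.trans (finCongr (mul_comm l 2)))

@[simp]
lemma blockIndexEquiv_val {l : ℕ} (r : Fin 2) (i : Fin l) :
    (blockIndexEquiv l (r, i) : ℕ) = 2 * i + r := by
  simp [blockIndexEquiv, finProdFinEquiv, add_comm]

lemma blockIndexEquiv_apply {l : ℕ} (r : Fin 2) (i : Fin l) :
    blockIndexEquiv l (r, i) = ⟨2 * i + r, by omega⟩ :=
  Fin.ext (blockIndexEquiv_val r i)

def borderIndexEquiv (l : ℕ) : (Fin 2 × Fin l) ⊕ Fin 1 ≃ Fin (2 * l + 1) :=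
  (Equiv.sumCongr (blockIndexEquiv l) (Equiv.refl _)).trans finSumFinEquiv

lemma YB_submatrix_borderIndexEquiv (l : ℕ) (a : Fin l → ℂ) (w : Fin (2 * l) → ℂ) :
    (YB l a w).submatrix (borderIndexEquiv l) (borderIndexEquiv l) =
      fromBlocks (blockDiagonal fun i => !![0, a i; -a i, 0])
        (replicateCol (Fin 1) (w ∘ blockIndexEquiv l))
        (-replicateRow (Fin 1) (w ∘ blockIndexEquiv l)) 0 := by
  ext (⟨r, i⟩ | p) (⟨s, j⟩ | q)
  · have hi := i.isLt
    have hj := j.isLt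
    fin_cases r <;> fin_cases s <;> by_cases hij : i = j <;>
      simp [borderIndexEquiv, YB, blockDiagonal_apply, hij] <;> split_ifs <;> simp_all <;> omega
  · have hi := i.isLt
    fin_cases r <;> simp [borderIndexEquiv, YB] <;> split_ifs <;>
      first | omega | exact congrArg w (Fin.ext (by simp))
  · have hj := j.isLt
    fin_cases s <;> simp [borderIndexEquiv, YB] <;> split_ifs <;>
      first | omega | exact congrArg (-w ·) (Fin.ext (by simp))
  · simp [borderIndexEquiv, YB]

lemma scalar_sub_YB_submatrix_borderIndexEquiv (l : ℕ) (a : Fin l → ℂ) (w : Fin (2 * l) → ℂ)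
    (t : ℂ) :
    (scalar _ t - YB l a w).submatrix (borderIndexEquiv l) (borderIndexEquiv l) =
      fromBlocks (blockDiagonal fun i => !![t, -a i; a i, t])
        (replicateCol (Fin 1) (-(w ∘ blockIndexEquiv l)))
        (replicateRow (Fin 1) (w ∘ blockIndexEquiv l)) (scalar _ t) := by
  rw [submatrix_sub, Pi.sub_apply, Pi.sub_apply, YB_submatrix_borderIndexEquiv]
  ext (⟨r, i⟩ | p) (⟨s, j⟩ | q)
  · fin_cases r <;> fin_cases s <;> by_cases hij : i = j <;> simp [blockDiagonal_apply, hij]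
  · simp
  · simp
  · simp [Subsingleton.elim p q]

lemma det_scalar_sub_YB (l : ℕ) (a : Fin l → ℂ) (w : Fin (2 * l) → ℂ) (t : ℂ)
    (ht : ∀ i, t ^ 2 + a i ^ 2 ≠ 0) :
    (scalar _ t - YB l a w).det =
      t * ((∏ i, (t ^ 2 + a i ^ 2)) + ∑ i : Fin l,
        (w (blockIndexEquiv l (0, i)) ^ 2 + w (blockIndexEquiv l (1, i)) ^ 2) *
          ∏ j ∈ Finset.univ.erase i, (t ^ 2 + a j ^ 2)) := by
  have hdet : ∀ i, (!![t, -a i; a i, t]).det = t ^ 2 + a i ^ 2 := fun i => by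
    rw [det_fin_two_of]; ring
  have hunit : ∀ i, IsUnit (!![t, -a i; a i, t]).det := fun i =>
    (hdet i).symm ▸ (ht i).isUnit
  have hA : IsUnit (blockDiagonal fun i => !![t, -a i; a i, t]).det := by
    simp only [det_blockDiagonal, hdet]
    exact (Finset.prod_ne_zero_iff.mpr fun i _ => ht i).isUnit
  rw [← det_submatrix_equiv_self (borderIndexEquiv l), scalar_sub_YB_submatrix_borderIndexEquiv,
    det_fromBlocks_replicateCol_replicateRow hA, mulVec_neg, dotProduct_neg, sub_neg_eq_add,
    det_blockDiagonal, inv_blockDiagonal hunit, dotProduct_blockDiagonal_mulVec]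
  simp only [hdet, scalar_apply, diagonal_apply_eq, Function.comp_apply,
    dotProduct_inv_mulVec_self_of_fin_two]
  have hterm : ∀ i, (∏ j, (t ^ 2 + a j ^ 2)) *
      (t * (w (blockIndexEquiv l (0, i)) ^ 2 + w (blockIndexEquiv l (1, i)) ^ 2) /
        (t ^ 2 + a i ^ 2)) =
      t * ((w (blockIndexEquiv l (0, i)) ^ 2 + w (blockIndexEquiv l (1, i)) ^ 2) *
        ∏ j ∈ Finset.univ.erase i, (t ^ 2 + a j ^ 2)) := fun i => by
    rw [← Finset.mul_prod_erase _ _ (Finset.mem_univ i)]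
    field_simp [ht i]
  rw [mul_add, Finset.mul_sum, Finset.sum_congr rfl fun i _ => hterm i, ← Finset.mul_sum]
  ring

/-- `det(t·I - Y) = t·[∏ᵢ(t² + aᵢ²) + ∑ᵢ (z_{i1}² + z_{i2}²) ∏_{j≠i}(t² + a_j²)]`. -/
theorem YB_charpoly (l : ℕ) (a : Fin l → ℂ) (w : Fin (2 * l) → ℂ) :
    (YB l a w).charpoly =
      X * ((∏ i : Fin l, (X ^ 2 + C (a i) ^ 2)) +
        ∑ i : Fin l,
          C (w ⟨2 * (i : ℕ), by have := i.isLt; omega⟩ ^ 2 +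
              w ⟨2 * (i : ℕ) + 1, by have := i.isLt; omega⟩ ^ 2) *
            ∏ j ∈ Finset.univ.erase i, (X ^ 2 + C (a j) ^ 2)) := by
  have hmonic : (∏ i : Fin l, (X ^ 2 + C (a i) ^ 2)).Monic :=
    monic_prod_of_monic _ _ fun i _ => by rw [← C_pow]; exact monic_X_pow_add_C _ two_ne_zero
  refine eq_of_eval_eq_of_eval_ne_zero hmonic.ne_zero fun t ht => ?_
  have ht' : ∀ i, t ^ 2 + a i ^ 2 ≠ 0 := by
    simpa [eval_prod, Finset.prod_ne_zero_iff] using ht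
  rw [eval_charpoly, det_scalar_sub_YB l a w t ht']
  simp [eval_prod, eval_finsetSum, blockIndexEquiv_apply]
end

section
/- The bordered skew-symmetric matrix X ∈ so(2l+2,ℂ) built from regular h = ⊕ a_i J ⊕ (0) (with a_i ≠ 0, a_i² ≠ a_j² for i ≠ j) with border entries satisfying z_{i1}² + z_{i2}² = ∏_j(b_j² - a_i²)/(-a_i² ∏_{j≠i}(a_j² - a_i²)) and z_{l+1}² = ∏_{i=1}^{l+1} b_i² / ∏_{i=1}^{l} a_i² has determinant z_{l+1}² ∏_{i=1}^{l} a_i², and hence its Pfaffian equals ±z_{l+1} ∏_{i=1}^{l} a_i; in particular by choosing the sign of z_{l+1} the Pfaffian can be made equal to either ∏_{i=1}^{l+1} b_i or -∏_{i=1}^{l+1} b_i. -/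
open Matrix

/-- The bordered skew-symmetric matrix `X ∈ so(2l+2,ℂ)` with top-left block
`h = ⊕ᵢ aᵢ·J ⊕ (0)`, last column `(z_{11},…,z_{l2}, z_{l+1}, 0)ᵀ` (encoded by
`w : Fin (2l+1) → ℂ`, `w(2l) = z_{l+1}`) and last row the negative transpose. -/
def XD (l : ℕ) (a : Fin l → ℂ) (w : Fin (2 * l + 1) → ℂ) :
    Matrix (Fin (2 * l + 2)) (Fin (2 * l + 2)) ℂ :=
  Matrix.of fun p q =>
    if h1 : (q : ℕ) = (p : ℕ) + 1 ∧ (p : ℕ) % 2 = 0 ∧ (p : ℕ) < 2 * l then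
      a ⟨(p : ℕ) / 2, by omega⟩
    else if h2 : (p : ℕ) = (q : ℕ) + 1 ∧ (q : ℕ) % 2 = 0 ∧ (q : ℕ) < 2 * l then
      -a ⟨(q : ℕ) / 2, by omega⟩
    else if h3 : (q : ℕ) = 2 * l + 1 ∧ (p : ℕ) < 2 * l + 1 then w ⟨(p : ℕ), by omega⟩
    else if h4 : (p : ℕ) = 2 * l + 1 ∧ (q : ℕ) < 2 * l + 1 then -w ⟨(q : ℕ), by omega⟩
    else 0

/-!
Reorder the indices of `X` as `l` pairs `(2i, 2i+1)` followed by the border pair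
`(2l, 2l+1)`. Then `X` has the block form `[[A, B], [-Bᵀ, D]]` with `A = diag(a) ⊗ J`,
`D = z_{l+1} J` (`J = [[0, 1], [-1, 0]]`) and `B` supported in the column `2l+1`. Since `D⁻¹` has
zero entry at `(2l+1, 2l+1)`, the Schur complement correction `B D⁻¹ Bᵀ` vanishes and
`det X = det A · det D = (∏ aᵢ)² z_{l+1}²`; when `z_{l+1} = 0` the row `2l` of `X` vanishes.
The Pfaffian statements are then square roots of this identity.
-/

open scoped Kronecker

namespace Matrix

variable {K n : Type*} [Field K] [Fintype n] [DecidableEq n]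

theorem det_fromBlocks_of_zero_corner (A : Matrix n n K) (u v : n → K)
    (D : Matrix (Fin 2) (Fin 2) K) (hD : D 0 0 = 0) :
    (fromBlocks A (of fun x k => ![0, u x] k) (of fun k x => ![0, v x] k) D).det =
      A.det * D.det := by
  by_cases hdet : D.det = 0
  · have hdet' : D 0 1 * D 1 0 = 0 := by simpa [det_fin_two, hD] using hdet
    rw [hdet, mul_zero]
    rcases mul_eq_zero.mp hdet' with h01 | h10
    · exact det_eq_zero_of_row_eq_zero (Sum.inr 0) fun
        | .inl x => rfl
        | .inr k => by fin_cases k <;> simp [hD, h01]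
    · exact det_eq_zero_of_column_eq_zero (Sum.inr 0) fun
        | .inl x => rfl
        | .inr k => by fin_cases k <;> simp [hD, h10]
  · let _ := D.invertibleOfIsUnitDet (isUnit_iff_ne_zero.mpr hdet)
    have hinv : D⁻¹ 1 1 = 0 := by simp [inv_def, adjugate_fin_two, hD]
    have hschur : (of fun x k => ![0, u x] k) * ⅟D * (of fun k x => ![0, v x] k) = 0 := by
      ext x y
      simp [mul_apply, Fin.sum_univ_two, hinv]
    rw [det_fromBlocks₂₂, hschur, sub_zero, mul_comm]

end Matrix

def finProdFinTwoSumFinTwoEquiv (l : ℕ) : (Fin l × Fin 2) ⊕ Fin 2 ≃ Fin (2 * l + 2) :=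
  (finProdFinEquiv.sumCongr (Equiv.refl _)).trans (finSumFinEquiv.trans (finCongr (by ring)))

theorem XD_submatrix (l : ℕ) (a : Fin l → ℂ) (w : Fin (2 * l + 1) → ℂ) :
    (XD l a w).submatrix (finProdFinTwoSumFinTwoEquiv l) (finProdFinTwoSumFinTwoEquiv l) =
      fromBlocks (diagonal a ⊗ₖ !![0, 1; -1, 0])
        (of fun x k => ![0, w ⟨x.2 + 2 * x.1, by omega⟩] k)
        (of fun k x => ![0, -w ⟨x.2 + 2 * x.1, by omega⟩] k)
        !![0, w (Fin.last _); -w (Fin.last _), 0] := by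
  ext (⟨i, j⟩ | k) (⟨i', j'⟩ | k')
  · by_cases hii : i = i'
    · subst hii
      fin_cases j <;> fin_cases j' <;> simp [XD, finProdFinTwoSumFinTwoEquiv] <;> split_ifs <;>
        first | rfl | omega
    · have hval := Fin.val_ne_of_ne hii
      simp [XD, finProdFinTwoSumFinTwoEquiv, hii]
      split_ifs <;> first | rfl | omega
  · fin_cases k' <;> simp [XD, finProdFinTwoSumFinTwoEquiv] <;> split_ifs <;> first | rfl | omega
  · fin_cases k <;> simp [XD, finProdFinTwoSumFinTwoEquiv] <;> split_ifs <;> first | rfl | omega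
  · fin_cases k <;> fin_cases k' <;> simp [XD, finProdFinTwoSumFinTwoEquiv, Fin.last]

theorem det_XD (l : ℕ) (a : Fin l → ℂ) (w : Fin (2 * l + 1) → ℂ) :
    (XD l a w).det = w (Fin.last _) ^ 2 * ∏ i, a i ^ 2 := by
  rw [← det_submatrix_equiv_self (finProdFinTwoSumFinTwoEquiv l), XD_submatrix,
    det_fromBlocks_of_zero_corner _ _ _ _ rfl, det_kronecker, det_diagonal, det_fin_two_of,
    det_fin_two_of, Finset.prod_pow, Fintype.card_fin, Fintype.card_fin]
  ring

/-- For regular `h` (`aᵢ ≠ 0`, `aᵢ² ≠ a_j²` for `i ≠ j`) and generic target data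
`b₁,…,b_{l+1}`, if the border entries satisfy the solution-variety equations
`z_{i1}² + z_{i2}² = ∏ⱼ(b_j² - a_i²)/(-a_i² ∏_{j≠i}(a_j² - a_i²))` and
`z_{l+1}² = ∏ b_i² / ∏ a_i²`, then `det X = z_{l+1}² ∏ a_i²`; hence any square
root of `det X` (in particular the Pfaffian) equals `± z_{l+1} ∏ aᵢ`, and by
a choice of the sign of `z_{l+1}` the Pfaffian may be made equal to either
`∏ bᵢ` or `-∏ bᵢ`. -/
theorem XD_det_pfaffian (l : ℕ) (a : Fin l → ℂ) (b : Fin (l + 1) → ℂ)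
    (w : Fin (2 * l + 1) → ℂ)
    (ha0 : ∀ i, a i ≠ 0) :
    (XD l a w).det = w ⟨2 * l, by omega⟩ ^ 2 * ∏ i, a i ^ 2 ∧
    (∀ pf : ℂ, pf ^ 2 = (XD l a w).det →
      pf = w ⟨2 * l, by omega⟩ * ∏ i, a i ∨
      pf = -(w ⟨2 * l, by omega⟩ * ∏ i, a i)) ∧
    (∃ zl : ℂ, zl ^ 2 = (∏ i, b i ^ 2) / ∏ i, a i ^ 2 ∧ zl * ∏ i, a i = ∏ i, b i) ∧
    (∃ zl : ℂ, zl ^ 2 = (∏ i, b i ^ 2) / ∏ i, a i ^ 2 ∧ zl * ∏ i, a i = -∏ i, b i) := by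
  have ha : ∏ i, a i ≠ 0 := Finset.prod_ne_zero_iff.mpr fun i _ => ha0 i
  refine ⟨det_XD l a w, fun pf hpf => sq_eq_sq_iff_eq_or_eq_neg.mp ?_,
    ⟨(∏ i, b i) / ∏ i, a i, ?_, div_mul_cancel₀ _ ha⟩,
    ⟨-((∏ i, b i) / ∏ i, a i), ?_, by rw [neg_mul, div_mul_cancel₀ _ ha]⟩⟩
  · rw [hpf, det_XD, mul_pow, Finset.prod_pow]
    rfl
  · rw [div_pow, Finset.prod_pow, Finset.prod_pow]
  · rw [neg_sq, div_pow, Finset.prod_pow, Finset.prod_pow]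
end

section
/- Let x ∈ gl(n,ℂ) with n ≥ 2 and suppose x is strongly regular, meaning the differentials of the functions f_{i,j}(y) = trace((y_i)^j) for 1 ≤ j ≤ i ≤ n are linearly independent at x. Then for every 1 ≤ i ≤ n, the cutoff x_i is a regular element of gl(i,ℂ), i.e., its centralizer in gl(i,ℂ) has dimension exactly i. -/
open Matrix

/-- The centralizer of `y` in `gl(m,ℂ)` as a subspace. -/
noncomputable def centSub (m : ℕ) (y : Matrix (Fin m) (Fin m) ℂ) :
    Submodule ℂ (Matrix (Fin m) (Fin m) ℂ) where
  carrier := {z | z * y = y * z}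
  add_mem' := by
    intro a b ha hb
    simp only [Set.mem_setOf_eq] at *
    rw [add_mul, mul_add, ha, hb]
  zero_mem' := by simp
  smul_mem' := by
    intro c a ha
    simp only [Set.mem_setOf_eq] at *
    rw [smul_mul_assoc, mul_smul_comm, ha]


/-!
Strong regularity makes the embedded powers `1, x_i, …, x_i^{i-1}` linearly independent, since
for fixed `i` the differentials of the `f_{i,j}` are exactly `j • (x_i)^{j-1}`. Viewing `ℂ^i`
as a finitely generated module over the PID `ℂ[X]`, with `X` acting by `x_i`, some vector `v`
has the same annihilator as the whole module; so `v, x_i v, …, x_i^{i-1} v` are independent,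
hence a basis.
A matrix commuting with `x_i` is then determined by its value at `v`, so the centralizer has
dimension at most `i`, and the powers of `x_i` give `i` independent elements of it.
-/

open Polynomial

theorem Module.End.exists_aeval_apply_eq_zero_imp_aeval_eq_zero {K V : Type*} [Field K]
    [AddCommGroup V] [Module K V] [FiniteDimensional K V] (f : Module.End K V) :
    ∃ v : V, ∀ p : K[X], aeval f p v = 0 → aeval f p = 0 := by
  obtain ⟨x, hx⟩ := Module.exists_ker_toSpanSingleton_eq_annihilator K[X] (Module.AEval' f)
  obtain ⟨v, rfl⟩ := (Module.AEval'.of f).surjective x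
  refine ⟨v, fun p hp => LinearMap.ext fun y => ?_⟩
  have hp : p ∈ Module.annihilator K[X] (Module.AEval' f) := by
    rw [← hx, LinearMap.mem_ker, LinearMap.toSpanSingleton_apply, ← Module.AEval.of_aeval_smul,
      Module.End.smul_def, hp, map_zero]
  have := Module.mem_annihilator.mp hp (Module.AEval'.of f y)
  rwa [← Module.AEval.of_aeval_smul, LinearEquiv.map_eq_zero_iff] at this

namespace Matrix

variable {ι K : Type*} [Fintype ι] [DecidableEq ι] [Field K]

theorem exists_aeval_mulVec_eq_zero_imp_aeval_eq_zero (A : Matrix ι ι K) :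
    ∃ v : ι → K, ∀ p : K[X], aeval A p *ᵥ v = 0 → aeval A p = 0 := by
  obtain ⟨v, hv⟩ := Module.End.exists_aeval_apply_eq_zero_imp_aeval_eq_zero (toLin' A)
  refine ⟨v, fun p hp => toLinAlgEquiv'.injective ?_⟩
  have key : aeval (toLin' A) p = toLinAlgEquiv' (aeval A p) :=
    aeval_algHom_apply (toLinAlgEquiv' : Matrix ι ι K ≃ₐ[K] _) A p
  rw [map_zero, ← key]
  exact hv p (by rw [key]; exact hp)

theorem linearIndependent_pow_mulVec {n : ℕ} {A : Matrix ι ι K} {v : ι → K}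
    (hA : LinearIndependent K fun k : Fin n => A ^ (k : ℕ))
    (hv : ∀ p : K[X], aeval A p *ᵥ v = 0 → aeval A p = 0) :
    LinearIndependent K fun k : Fin n => A ^ (k : ℕ) *ᵥ v := by
  rw [Fintype.linearIndependent_iff] at hA ⊢
  intro c hc
  have hsum :
      ∑ k : Fin n, c k • A ^ (k : ℕ) = aeval A (∑ k : Fin n, C (c k) * X ^ (k : ℕ)) := by
    simp [map_sum, Algebra.smul_def]
  refine hA c (hsum ▸ hv _ ?_)
  rw [← hsum, sum_mulVec]
  simpa [smul_mulVec] using hc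

theorem eq_zero_of_commute_of_mulVec_eq_zero {n : ℕ} {A Z : Matrix ι ι K} {v : ι → K}
    (hspan : Submodule.span K (Set.range fun k : Fin n => A ^ (k : ℕ) *ᵥ v) = ⊤)
    (hZ : Commute Z A) (hZv : Z *ᵥ v = 0) : Z = 0 := by
  refine toLin'.injective (LinearMap.ext_on_range hspan fun k => ?_)
  rw [toLin'_apply, mulVec_mulVec, (hZ.pow_right k).eq, ← mulVec_mulVec, hZv]
  simp

theorem finrank_centralizer_of_linearIndependent_pow {A : Matrix ι ι K} {m : ℕ}
    (hA : LinearIndependent K fun k : Fin m => A ^ (k : ℕ))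
    (hm : Fintype.card ι ≤ m) :
    Module.finrank K (Subalgebra.centralizer K {A}) = Fintype.card ι := by
  obtain ⟨v, hv⟩ := A.exists_aeval_mulVec_eq_zero_imp_aeval_eq_zero
  have hAv := linearIndependent_pow_mulVec hA hv
  have hspan := hAv.span_eq_top_of_card_eq_finrank'
    (le_antisymm (by simpa using hAv.fintype_card_le_finrank) (by simpa using hm))
  refine le_antisymm ?_ (hm.trans ?_)
  · let φ : Subalgebra.centralizer K {A} →ₗ[K] ι → K :=
      LinearMap.applyₗ v ∘ₗ toLin'.toLinearMap ∘ₗ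
        (Subalgebra.centralizer K {A}).val.toLinearMap
    have hφ : Function.Injective φ := by
      refine (injective_iff_map_eq_zero φ).mpr fun ⟨Z, hZ⟩ hZv => Subtype.ext ?_
      refine eq_zero_of_commute_of_mulVec_eq_zero hspan ?_ hZv
      exact ((Subalgebra.mem_centralizer_iff K).mp hZ A rfl).symm
    simpa using LinearMap.finrank_le_finrank_of_injective hφ
  · have hpow_mem (k : ℕ) : A ^ k ∈ Subalgebra.centralizer K {A} := by
      simp [Subalgebra.mem_centralizer_iff, pow_mul_comm']
    have := LinearIndependent.of_comp (Subalgebra.centralizer K {A}).val.toLinearMap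
      (v := fun k : Fin m => (⟨A ^ (k : ℕ), hpow_mem k⟩ : Subalgebra.centralizer K {A})) hA
    simpa using this.fintype_card_le_finrank

end Matrix

section Cutoff

variable {n i : ℕ} (hin : i ≤ n)

theorem cutoff_apply_castLE (Z : Matrix (Fin n) (Fin n) ℂ) (a b : Fin i) :
    cutoff n Z i (Fin.castLE hin a) (Fin.castLE hin b) =
      Z (Fin.castLE hin a) (Fin.castLE hin b) := by
  simp [cutoff]

theorem cutoff_apply_of_not_lt {Z : Matrix (Fin n) (Fin n) ℂ} {a b : Fin n}
    (h : ¬((a : ℕ) < i ∧ (b : ℕ) < i)) : cutoff n Z i a b = 0 := by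
  simp [cutoff, h]

theorem submatrix_cutoff_mul (Z W : Matrix (Fin n) (Fin n) ℂ) :
    (cutoff n Z i * W).submatrix (Fin.castLE hin) (Fin.castLE hin) =
      Z.submatrix (Fin.castLE hin) (Fin.castLE hin) *
        W.submatrix (Fin.castLE hin) (Fin.castLE hin) := by
  ext a b
  simp only [submatrix_apply, mul_apply]
  refine (Fintype.sum_of_injective _ (Fin.castLE_injective hin) _ _ (fun c hc => ?_)
    fun c => by rw [cutoff_apply_castLE]).symm
  rw [cutoff_apply_of_not_lt fun h => hc ⟨⟨c, h.2⟩, rfl⟩, zero_mul]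

theorem submatrix_cutoff_pow (x : Matrix (Fin n) (Fin n) ℂ) (k : ℕ) :
    (cutoff n x i ^ k).submatrix (Fin.castLE hin) (Fin.castLE hin) =
      x.submatrix (Fin.castLE hin) (Fin.castLE hin) ^ k := by
  induction k with
  | zero => exact submatrix_one _ (Fin.castLE_injective hin)
  | succ k ih => rw [pow_succ', submatrix_cutoff_mul, ih, pow_succ']

theorem blkpow_apply_castLE (x : Matrix (Fin n) (Fin n) ℂ) (k : ℕ) (a b : Fin i) :
    blkpow n x i k (Fin.castLE hin a) (Fin.castLE hin b) =
      (x.submatrix (Fin.castLE hin) (Fin.castLE hin) ^ k) a b := by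
  rw [blkpow, cutoff_apply_castLE]
  exact congrFun (congrFun (submatrix_cutoff_pow hin x k) a) b

theorem linearIndependent_pow_submatrix_of_blkpow {m : ℕ} {x : Matrix (Fin n) (Fin n) ℂ}
    (h : LinearIndependent ℂ fun k : Fin m => blkpow n x i k) :
    LinearIndependent ℂ fun k : Fin m =>
      x.submatrix (Fin.castLE hin) (Fin.castLE hin) ^ (k : ℕ) := by
  rw [Fintype.linearIndependent_iff] at h ⊢
  refine fun c hc => h c (Matrix.ext fun a b => ?_)
  simp only [Matrix.sum_apply, Matrix.smul_apply, Matrix.zero_apply]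
  by_cases hab : (a : ℕ) < i ∧ (b : ℕ) < i
  · obtain ⟨a', rfl⟩ : ∃ a' : Fin i, Fin.castLE hin a' = a := ⟨⟨a, hab.1⟩, rfl⟩
    obtain ⟨b', rfl⟩ : ∃ b' : Fin i, Fin.castLE hin b' = b := ⟨⟨b, hab.2⟩, rfl⟩
    simpa [blkpow_apply_castLE, Matrix.sum_apply] using congrFun (congrFun hc a') b'
  · simp [blkpow, cutoff_apply_of_not_lt hab]

end Cutoff

theorem linearIndependent_blkpow_of_stronglyRegular {n i : ℕ} (hin : i ≤ n)
    {x : Matrix (Fin n) (Fin n) ℂ}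
    (hsreg : LinearIndependent ℂ
      (fun p : {p : ℕ × ℕ // 1 ≤ p.2 ∧ p.2 ≤ p.1 ∧ p.1 ≤ n} =>
        ((p.1.2 : ℂ) • blkpow n x p.1.1 (p.1.2 - 1) : Matrix (Fin n) (Fin n) ℂ))) :
    LinearIndependent ℂ fun k : Fin i => blkpow n x i k := by
  let row : Fin i → {p : ℕ × ℕ // 1 ≤ p.2 ∧ p.2 ≤ p.1 ∧ p.1 ≤ n} :=
    fun k => ⟨(i, k + 1), by omega, by omega, hin⟩
  have hrow : Function.Injective row := fun k l hkl => by
    simpa [row, Fin.ext_iff] using hkl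
  rw [← LinearIndependent.units_smul_iff _
    fun k : Fin i => Units.mk0 ((k : ℂ) + 1) (Nat.cast_add_one_ne_zero k)]
  convert hsreg.comp row hrow using 1
  ext k : 1
  simp [row, Units.smul_def]

theorem centSub_eq_centralizer (m : ℕ) (y : Matrix (Fin m) (Fin m) ℂ) :
    centSub m y = Subalgebra.toSubmodule (Subalgebra.centralizer ℂ {y}) := by
  ext z
  simp [centSub, Subalgebra.mem_centralizer_iff, eq_comm]

theorem strongly_regular_cutoffs_regular_general (n : ℕ)
    (x : Matrix (Fin n) (Fin n) ℂ)
    (hsreg : LinearIndependent ℂ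
      (fun p : {p : ℕ × ℕ // 1 ≤ p.2 ∧ p.2 ≤ p.1 ∧ p.1 ≤ n} =>
        ((p.1.2 : ℂ) • blkpow n x p.1.1 (p.1.2 - 1) : Matrix (Fin n) (Fin n) ℂ))) :
    ∀ i : ℕ, 1 ≤ i → ∀ hin : i ≤ n,
      Module.finrank ℂ
        (centSub i (x.submatrix (Fin.castLE hin) (Fin.castLE hin))) = i := by
  intro i _ hin
  have hpow := linearIndependent_pow_submatrix_of_blkpow hin
    (linearIndependent_blkpow_of_stronglyRegular hin hsreg)
  rw [centSub_eq_centralizer, Subalgebra.finrank_toSubmodule,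
    Matrix.finrank_centralizer_of_linearIndependent_pow hpow (Fintype.card_fin i).le,
    Fintype.card_fin]

/-- If `x ∈ gl(n,ℂ)` (`n ≥ 2`) is strongly regular, i.e. the differentials of
`f_{i,j}(y) = tr((y_i)^j)` for `1 ≤ j ≤ i ≤ n` — identified via the trace form
with the matrices `j·(x_i)^{j-1}` embedded in `gl(n)` — are linearly
independent at `x`, then every cutoff `x_i` (`1 ≤ i ≤ n`) is a regular element
of `gl(i,ℂ)`: its centralizer in `gl(i,ℂ)` has dimension exactly `i`. -/
theorem strongly_regular_cutoffs_regular (n : ℕ) (hn : 2 ≤ n)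
    (x : Matrix (Fin n) (Fin n) ℂ)
    (hsreg : LinearIndependent ℂ
      (fun p : {p : ℕ × ℕ // 1 ≤ p.2 ∧ p.2 ≤ p.1 ∧ p.1 ≤ n} =>
        ((p.1.2 : ℂ) • blkpow n x p.1.1 (p.1.2 - 1) : Matrix (Fin n) (Fin n) ℂ))) :
    ∀ i : ℕ, 1 ≤ i → ∀ hin : i ≤ n,
      Module.finrank ℂ
        (centSub i (x.submatrix (Fin.castLE hin) (Fin.castLE hin))) = i :=
  strongly_regular_cutoffs_regular_general n x hsreg
end
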